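/- Lower bound of Theorem 4: for every state ρ and every ε ≥ 0, the smoothed max-relative entropy of coherence lower-bounds the one-shot coherence cost under MIO: C_max^ε(ρ) ≤ C_MIO^ε(ρ). -/

import Mathlib

open scoped Matrix ComplexOrder

namespace OneShot

variable {ι κ : Type*} [Fintype ι] [DecidableEq ι] [Fintype κ] [DecidableEq κ]

/-- A quantum state: a positive semidefinite matrix with unit trace. -/
def IsState (ρ : Matrix ι ι ℂ) : Prop := ρ.PosSemidef ∧ ρ.trace = 1

/-- An incoherent state: a state that is diagonal in the computational basis. -/
def IsIncoherent (ρ : Matrix ι ι ℂ) : Prop := IsState ρ ∧ ρ.IsDiag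

/-- The completely dephasing channel `Δ`. -/
def dephase (ρ : Matrix ι ι ℂ) : Matrix ι ι ℂ := Matrix.diagonal fun i => ρ i i

/-- The max-relative entropy of coherence
`C_max(ρ) = min_{δ ∈ 𝓘} D_max(ρ‖δ) = log₂ min {λ ≥ 0 | ∃ δ ∈ 𝓘, ρ ≤ λ δ}`. -/
noncomputable def Cmax (ρ : Matrix ι ι ℂ) : ℝ :=
  Real.logb 2 (sInf {l : ℝ | 0 ≤ l ∧ ∃ δ, IsIncoherent δ ∧ (l • δ - ρ).PosSemidef})

/-- `C_{Δ,max}(ρ) = log₂ min {λ ≥ 0 | ρ ≤ λ Δ(ρ)}`. -/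
noncomputable def CDmax (ρ : Matrix ι ι ℂ) : ℝ :=
  Real.logb 2 (sInf {l : ℝ | 0 ≤ l ∧ (l • dephase ρ - ρ).PosSemidef})

/-- Complete positivity of a linear map on matrices. -/
def CompletelyPositive (Λ : Matrix ι ι ℂ →ₗ[ℂ] Matrix κ κ ℂ) : Prop :=
  ∀ (k : ℕ) (M : Matrix (Fin k × ι) (Fin k × ι) ℂ), M.PosSemidef →
    (Matrix.of fun p q : Fin k × κ =>
      Λ (Matrix.of fun x y => M (p.1, x) (q.1, y)) p.2 q.2).PosSemidef

/-- Trace preservation. -/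
def TracePreserving (Λ : Matrix ι ι ℂ →ₗ[ℂ] Matrix κ κ ℂ) : Prop :=
  ∀ A, (Λ A).trace = A.trace

/-- A maximally incoherent operation (MIO): a CPTP map sending every incoherent state
to an incoherent state. -/
def IsMIO (Λ : Matrix ι ι ℂ →ₗ[ℂ] Matrix κ κ ℂ) : Prop :=
  CompletelyPositive Λ ∧ TracePreserving Λ ∧ ∀ δ, IsIncoherent δ → IsIncoherent (Λ δ)

/-- A dephasing-covariant incoherent operation (DIO): a CPTP map commuting with `Δ`. -/
def IsDIO (Λ : Matrix ι ι ℂ →ₗ[ℂ] Matrix ι ι ℂ) : Prop :=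
  CompletelyPositive Λ ∧ TracePreserving Λ ∧ ∀ ρ, Λ (dephase ρ) = dephase (Λ ρ)

/-- An incoherent-preserving (Kraus) operator: `K δ Kᴴ` is a nonnegative multiple of an
incoherent state, for every incoherent state `δ`. -/
def IncoherentPreserving (K : Matrix κ ι ℂ) : Prop :=
  ∀ δ : Matrix ι ι ℂ, IsIncoherent δ →
    ∃ c : ℝ, 0 ≤ c ∧ ∃ δ' : Matrix κ κ ℂ, IsIncoherent δ' ∧ K * δ * Kᴴ = (c : ℂ) • δ'

/-- An incoherent operation (IO). -/
def IsIO (Λ : Matrix ι ι ℂ →ₗ[ℂ] Matrix κ κ ℂ) : Prop :=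
  ∃ (N : ℕ) (K : Fin N → Matrix κ ι ℂ),
    (∀ n, IncoherentPreserving (K n)) ∧ (∑ n, (K n)ᴴ * K n = 1) ∧
    ∀ ρ, Λ ρ = ∑ n, K n * ρ * (K n)ᴴ

/-- A strictly incoherent operation (SIO). -/
def IsSIO (Λ : Matrix ι ι ℂ →ₗ[ℂ] Matrix κ κ ℂ) : Prop :=
  ∃ (N : ℕ) (K : Fin N → Matrix κ ι ℂ),
    (∀ n, IncoherentPreserving (K n)) ∧ (∀ n, IncoherentPreserving (K n)ᴴ) ∧
    (∑ n, (K n)ᴴ * K n = 1) ∧ ∀ ρ, Λ ρ = ∑ n, K n * ρ * (K n)ᴴ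

/-- The outer product `|ψ⟩⟨ψ|`. -/
def outer (ψ : ι → ℂ) : Matrix ι ι ℂ := Matrix.of fun i j => ψ i * star (ψ j)

/-- `T ψ` is the number of nonzero computational-basis coefficients of `ψ`. -/
noncomputable def T (ψ : ι → ℂ) : ℕ := (Finset.univ.filter fun i => ψ i ≠ 0).card

/-- A finite pure-state decomposition `ρ = Σ_j p_j |ψ_j⟩⟨ψ_j|`. -/
def IsDecomposition (ρ : Matrix ι ι ℂ) (n : ℕ) (p : Fin n → ℝ) (ψ : Fin n → ι → ℂ) : Prop :=
  (∀ j, 0 < p j) ∧ (∑ j, p j = 1) ∧ (∀ j, ∑ i, Complex.normSq (ψ j i) = 1) ∧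
    ρ = ∑ j, p j • outer (ψ j)

/-- `C_0(ρ) = min over decompositions of max_j log₂ T(ψ_j)`. -/
noncomputable def C0 (ρ : Matrix ι ι ℂ) : ℝ :=
  sInf { r | ∃ n p ψ, IsDecomposition ρ n p ψ ∧
    r = Real.logb 2 (↑(Finset.univ.sup fun j => T (ψ j)) : ℝ) }

/-- Matrix square root of a positive semidefinite matrix (junk value `0` elsewhere). -/
noncomputable def msqrt (A : Matrix ι ι ℂ) : Matrix ι ι ℂ :=
  letI := Classical.propDecidable A.PosSemidef
  if h : A.PosSemidef then
    (h.1.eigenvectorUnitary : Matrix ι ι ℂ) *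
      Matrix.diagonal ((↑) ∘ (Real.sqrt ·) ∘ h.1.eigenvalues) *
      (star h.1.eigenvectorUnitary : Matrix ι ι ℂ)
  else 0

/-- Uhlmann fidelity `F(ρ,σ) = (Tr √(√ρ σ √ρ))²`. -/
noncomputable def Fid (ρ σ : Matrix ι ι ℂ) : ℝ :=
  ((msqrt (msqrt ρ * σ * msqrt ρ)).trace.re) ^ 2

/-- Smoothed `C_max`. -/
noncomputable def Cmaxeps (ρ : Matrix ι ι ℂ) (ε : ℝ) : ℝ :=
  sInf { r | ∃ ρ', IsState ρ' ∧ 1 - ε ≤ Fid ρ ρ' ∧ r = Cmax ρ' }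

/-- Smoothed `C_{Δ,max}`. -/
noncomputable def CDmaxeps (ρ : Matrix ι ι ℂ) (ε : ℝ) : ℝ :=
  sInf { r | ∃ ρ', IsState ρ' ∧ 1 - ε ≤ Fid ρ ρ' ∧ r = CDmax ρ' }

/-- Smoothed `C_0`. -/
noncomputable def C0eps (ρ : Matrix ι ι ℂ) (ε : ℝ) : ℝ :=
  sInf { r | ∃ ρ', IsState ρ' ∧ 1 - ε ≤ Fid ρ ρ' ∧ r = C0 ρ' }

/-- The maximally coherent state `Ψ_M = |Ψ_M⟩⟨Ψ_M|` of dimension `M`. -/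
noncomputable def PsiM (M : ℕ) : Matrix (Fin M) (Fin M) ℂ := Matrix.of fun _ _ => (1 : ℂ) / M

/-- One-shot coherence cost under MIO. -/
noncomputable def CMIOeps (ρ : Matrix ι ι ℂ) (ε : ℝ) : ℝ :=
  sInf { r | ∃ M : ℕ, 1 ≤ M ∧ r = Real.logb 2 M ∧
    ∃ Λ : Matrix (Fin M) (Fin M) ℂ →ₗ[ℂ] Matrix ι ι ℂ, IsMIO Λ ∧ 1 - ε ≤ Fid ρ (Λ (PsiM M)) }

/-- One-shot coherence cost under DIO. -/
noncomputable def CDIOeps (ρ : Matrix ι ι ℂ) (ε : ℝ) : ℝ :=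
  sInf { r | ∃ M : ℕ, 1 ≤ M ∧ r = Real.logb 2 M ∧
    ∃ Λ : Matrix (Fin M) (Fin M) ℂ →ₗ[ℂ] Matrix ι ι ℂ,
      CompletelyPositive Λ ∧ TracePreserving Λ ∧ (∀ ω, Λ (dephase ω) = dephase (Λ ω)) ∧
      1 - ε ≤ Fid ρ (Λ (PsiM M)) }

/-- One-shot coherence cost under IO. -/
noncomputable def CIOeps (ρ : Matrix ι ι ℂ) (ε : ℝ) : ℝ :=
  sInf { r | ∃ M : ℕ, 1 ≤ M ∧ r = Real.logb 2 M ∧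
    ∃ Λ : Matrix (Fin M) (Fin M) ℂ →ₗ[ℂ] Matrix ι ι ℂ, IsIO Λ ∧ 1 - ε ≤ Fid ρ (Λ (PsiM M)) }

/-- One-shot coherence cost under SIO. -/
noncomputable def CSIOeps (ρ : Matrix ι ι ℂ) (ε : ℝ) : ℝ :=
  sInf { r | ∃ M : ℕ, 1 ≤ M ∧ r = Real.logb 2 M ∧
    ∃ Λ : Matrix (Fin M) (Fin M) ℂ →ₗ[ℂ] Matrix ι ι ℂ, IsSIO Λ ∧ 1 - ε ≤ Fid ρ (Λ (PsiM M)) }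

/-- Matrix logarithm (base 2) via the spectral decomposition, with `log₂ 0 = 0` junk
convention on the kernel, and junk value `0` on non-Hermitian matrices. -/
noncomputable def mlog2 (A : Matrix ι ι ℂ) : Matrix ι ι ℂ :=
  letI := Classical.propDecidable A.IsHermitian
  if h : A.IsHermitian then
    (h.eigenvectorUnitary : Matrix ι ι ℂ) *
      Matrix.diagonal (fun i => (Real.logb 2 (h.eigenvalues i) : ℂ)) *
      (h.eigenvectorUnitary : Matrix ι ι ℂ)ᴴ
  else 0

/-- The relative entropy of coherence `C_r(ρ) = min_{δ ∈ 𝓘} S(ρ‖δ)`, where the minimum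
is (equivalently) restricted to those `δ` whose support contains the support of `ρ`,
on which `S(ρ‖δ) = Tr[ρ (log₂ ρ − log₂ δ)]` is finite. -/
noncomputable def Cr (ρ : Matrix ι ι ℂ) : ℝ :=
  sInf { r | ∃ δ, IsIncoherent δ ∧ (∀ v : ι → ℂ, δ.mulVec v = 0 → ρ.mulVec v = 0) ∧
    r = ((ρ * (mlog2 ρ - mlog2 δ)).trace).re }

/-- Von Neumann entropy (base 2). -/
noncomputable def vN (σ : Matrix ι ι ℂ) : ℝ := -((σ * mlog2 σ).trace.re)

/-- The coherence of formation. -/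
noncomputable def Cf (ρ : Matrix ι ι ℂ) : ℝ :=
  sInf { r | ∃ n p ψ, IsDecomposition ρ n p ψ ∧
    r = ∑ j, p j * vN (dephase (outer (ψ j))) }

/-- The set `A_ρ = { (1/t)[(1+t)Δ(ρ) − ρ] : t > 0, (1+t)Δ(ρ) − ρ ≥ 0 }`. -/
def Aset (ρ : Matrix ι ι ℂ) : Set (Matrix ι ι ℂ) :=
  { σ | ∃ t : ℝ, 0 < t ∧ ((1 + t) • dephase ρ - ρ).PosSemidef ∧
      σ = t⁻¹ • ((1 + t) • dephase ρ - ρ) }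

/-- The `n`-fold tensor power `ρ^{⊗ n}`. -/
def tpow (ρ : Matrix ι ι ℂ) (n : ℕ) : Matrix (Fin n → ι) (Fin n → ι) ℂ :=
  Matrix.of fun i j => ∏ t, ρ (i t) (j t)

end OneShot

/-!
If an MIO `Λ` maps `Ψ_M` to `ρ'`, then `Λ(𝟙/M)` is incoherent and
`M • Λ(𝟙/M) - Λ(Ψ_M) = Λ(𝟙 - Ψ_M) ≥ 0`, so `C_max(ρ') ≤ log₂ M`; since `ρ'` is an admissible
smoothing of `ρ`, every `log₂ M` in the set defining `C_MIO^ε(ρ)` bounds `C_max^ε(ρ)`.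
That set is nonempty, so its infimum is not the junk value `sInf ∅ = 0`: the
measure-and-prepare channel `X ↦ Tr(Ψ_M X) ρ + Tr((𝟙 - Ψ_M) X) σ` prepares `ρ` from `Ψ_M`,
and for `ρ ≤ M δ` with `δ` incoherent the choice `σ = (M - 1)⁻¹ (M δ - ρ)` sends every
incoherent input (for which `Tr(Ψ_M X) = 1/M`) to `δ`.
-/

namespace OneShot

open scoped MatrixOrder

variable {ι κ : Type*}

lemma msqrt_eq_cfcSqrt [Fintype ι] [DecidableEq ι] {A : Matrix ι ι ℂ} (hA : A.PosSemidef) :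
    msqrt A = CFC.sqrt A := by
  rw [CFC.sqrt_eq_cfc, cfc_nnreal_eq_real _ A, hA.1.cfc_eq, msqrt, dif_pos hA]
  simp only [Matrix.IsHermitian.cfc, Unitary.conjStarAlgAut_apply]
  congr 3
  funext i
  simp [Real.coe_sqrt, hA.eigenvalues_nonneg i]

lemma Fid_self [Fintype ι] [DecidableEq ι] {ρ : Matrix ι ι ℂ} (hρ : IsState ρ) :
    Fid ρ ρ = 1 := by
  have hs : CFC.sqrt ρ * CFC.sqrt ρ = ρ := CFC.sqrt_mul_sqrt_self ρ hρ.1.nonneg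
  have hsq : msqrt ρ * ρ * msqrt ρ = ρ ^ 2 :=
    calc msqrt ρ * ρ * msqrt ρ = CFC.sqrt ρ * (CFC.sqrt ρ * CFC.sqrt ρ) * CFC.sqrt ρ := by
          rw [msqrt_eq_cfcSqrt hρ.1, hs]
      _ = (CFC.sqrt ρ * CFC.sqrt ρ) * (CFC.sqrt ρ * CFC.sqrt ρ) := by simp only [mul_assoc]
      _ = ρ ^ 2 := by rw [hs, sq]
  rw [Fid, hsq, msqrt_eq_cfcSqrt (hρ.1.pow 2), CFC.sqrt_sq ρ hρ.1.nonneg, hρ.2]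
  norm_num

lemma IsState.nonempty [Fintype ι] {ρ : Matrix ι ι ℂ} (hρ : IsState ρ) : Nonempty ι := by
  by_contra! hι
  simpa [Matrix.trace] using hρ.2

lemma IsState.le_one [Fintype ι] [DecidableEq ι] {ρ : Matrix ι ι ℂ} (hρ : IsState ρ) :
    ρ ≤ 1 := by
  have hH := hρ.1.isHermitian
  have hsum : ∑ i, hH.eigenvalues i = 1 := by
    have := congrArg Complex.re (hH.trace_eq_sum_eigenvalues.symm.trans hρ.2)
    simpa using this
  rw [← map_one (algebraMap ℝ (Matrix ι ι ℂ))]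
  refine le_algebraMap_of_spectrum_le (fun x hx => ?_) hH.isSelfAdjoint
  obtain ⟨i, rfl⟩ := hH.spectrum_real_eq_range_eigenvalues ▸ hx
  exact hsum ▸ Finset.single_le_sum (fun j _ => hρ.1.eigenvalues_nonneg j) (Finset.mem_univ i)

lemma IsState.one_le_of_le_smul [Fintype ι] {ρ δ : Matrix ι ι ℂ} (hρ : IsState ρ)
    (hδ : IsState δ) {l : ℝ} (h : ρ ≤ l • δ) : 1 ≤ l := by
  have htr := (Matrix.le_iff.mp h).trace_nonneg
  rw [Matrix.trace_sub, Matrix.trace_smul, hδ.2, hρ.2, Complex.real_smul, mul_one,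
    ← Complex.ofReal_one, ← Complex.ofReal_sub, Complex.zero_le_real] at htr
  linarith

lemma Cmax_nonneg [Fintype ι] {ρ : Matrix ι ι ℂ} (hρ : IsState ρ) : 0 ≤ Cmax ρ := by
  rcases Set.eq_empty_or_nonempty
    {l : ℝ | 0 ≤ l ∧ ∃ δ, IsIncoherent δ ∧ (l • δ - ρ).PosSemidef} with hS | hS
  · rw [Cmax, hS, Real.sInf_empty, Real.logb_zero]
  · exact Real.logb_nonneg one_lt_two
      (le_csInf hS fun l ⟨_, _, hδ, h⟩ => hρ.one_le_of_le_smul hδ.1 h)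

lemma Cmax_le_logb [Fintype ι] {ρ δ : Matrix ι ι ℂ} (hρ : IsState ρ) (hδ : IsIncoherent δ)
    {l : ℝ} (h : ρ ≤ l • δ) : Cmax ρ ≤ Real.logb 2 l := by
  have hl := hρ.one_le_of_le_smul hδ.1 h
  have hmem : l ∈ {l : ℝ | 0 ≤ l ∧ ∃ δ, IsIncoherent δ ∧ (l • δ - ρ).PosSemidef} :=
    ⟨by linarith, δ, hδ, h⟩
  refine Real.logb_le_logb_of_le one_lt_two ?_ (csInf_le ⟨0, fun l hl => hl.1⟩ hmem)
  exact zero_lt_one.trans_le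
    (le_csInf ⟨l, hmem⟩ fun l ⟨_, _, hδ, h⟩ => hρ.one_le_of_le_smul hδ.1 h)

lemma Cmaxeps_le_Cmax [Fintype ι] [DecidableEq ι] {ρ ρ' : Matrix ι ι ℂ} {ε : ℝ}
    (hρ' : IsState ρ') (hF : 1 - ε ≤ Fid ρ ρ') : Cmaxeps ρ ε ≤ Cmax ρ' :=
  csInf_le ⟨0, fun _ ⟨_, hσ, _, hr⟩ => hr ▸ Cmax_nonneg hσ⟩ ⟨ρ', hρ', hF, rfl⟩

lemma CompletelyPositive.posSemidef_apply {Λ : Matrix ι ι ℂ →ₗ[ℂ] Matrix κ κ ℂ}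
    (hΛ : CompletelyPositive Λ) {X : Matrix ι ι ℂ} (hX : X.PosSemidef) : (Λ X).PosSemidef :=
  (hΛ 1 _ (hX.submatrix Prod.snd)).submatrix fun i => ((0 : Fin 1), i)

lemma CompletelyPositive.monotone {Λ : Matrix ι ι ℂ →ₗ[ℂ] Matrix κ κ ℂ}
    (hΛ : CompletelyPositive Λ) : Monotone Λ := fun X Y h => by
  simpa only [Matrix.le_iff, map_sub] using hΛ.posSemidef_apply (Matrix.le_iff.mp h)

lemma CompletelyPositive.add {Λ₁ Λ₂ : Matrix ι ι ℂ →ₗ[ℂ] Matrix κ κ ℂ}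
    (h₁ : CompletelyPositive Λ₁) (h₂ : CompletelyPositive Λ₂) : CompletelyPositive (Λ₁ + Λ₂) :=
  fun k M hM => (h₁ k M hM).add (h₂ k M hM)

lemma IsMIO.isState_apply [Fintype ι] [Fintype κ] {Λ : Matrix ι ι ℂ →ₗ[ℂ] Matrix κ κ ℂ}
    (hΛ : IsMIO Λ) {X : Matrix ι ι ℂ} (hX : IsState X) : IsState (Λ X) :=
  ⟨hΛ.1.posSemidef_apply hX.1, (hΛ.2.1 X).trans hX.2⟩

def measurePrepare [Fintype ι] (A : Matrix ι ι ℂ) (B : Matrix κ κ ℂ) :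
    Matrix ι ι ℂ →ₗ[ℂ] Matrix κ κ ℂ :=
  (Matrix.traceLinearMap ι ℂ ℂ ∘ₗ LinearMap.mulLeft ℂ A).smulRight B

lemma measurePrepare_apply [Fintype ι] (A : Matrix ι ι ℂ) (B : Matrix κ κ ℂ) (X : Matrix ι ι ℂ) :
    measurePrepare A B X = (A * X).trace • B :=
  rfl

lemma posSemidef_trace_mul_blocks [Fintype ι] {n : Type*} [Fintype n] [DecidableEq n]
    {A : Matrix ι ι ℂ} (hA : A.PosSemidef) {M : Matrix (n × ι) (n × ι) ℂ} (hM : M.PosSemidef) :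
    (Matrix.of fun p q : n => (A * Matrix.of fun x y => M (p, x) (q, y)).trace).PosSemidef := by
  classical
  obtain ⟨a, rfl⟩ := CStarAlgebra.nonneg_iff_eq_star_mul_self.mp hA.nonneg
  let W : ι → Matrix n (n × ι) ℂ := fun z => Matrix.of fun p q => if p = q.1 then a z q.2 else 0
  have hW : (Matrix.of fun p q : n => (star a * a * Matrix.of fun x y => M (p, x) (q, y)).trace)
      = ∑ z, W z * M * (W z)ᴴ := by
    ext p q
    simp only [W, Matrix.trace, Matrix.diag_apply, Matrix.mul_apply, Matrix.star_apply,
      RCLike.star_def, Matrix.of_apply, Matrix.sum_apply, Matrix.conjTranspose_apply,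
      Fintype.sum_prod_type, ite_mul, zero_mul, apply_ite, map_zero, mul_zero,
      Finset.sum_ite_irrel, Finset.sum_const_zero, Finset.sum_ite_eq, Finset.mem_univ, if_true,
      Finset.sum_mul]
    conv_lhs => enter [2, i]; rw [Finset.sum_comm]
    rw [Finset.sum_comm]
    exact Finset.sum_congr rfl fun z _ => Finset.sum_congr rfl fun i _ =>
      Finset.sum_congr rfl fun j _ => by ring
  rw [hW]
  exact Matrix.posSemidef_sum _ fun z _ => hM.mul_mul_conjTranspose_same (W z)

lemma completelyPositive_measurePrepare [Fintype ι] [Finite κ] {A : Matrix ι ι ℂ}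
    {B : Matrix κ κ ℂ} (hA : A.PosSemidef) (hB : B.PosSemidef) :
    CompletelyPositive (measurePrepare A B) :=
  fun _ _ hM => (posSemidef_trace_mul_blocks hA hM).kronecker hB

lemma tracePreserving_measurePrepare_add [Fintype ι] [DecidableEq ι] [Fintype κ]
    (P : Matrix ι ι ℂ) {ρ σ : Matrix κ κ ℂ} (hρ : ρ.trace = 1) (hσ : σ.trace = 1) :
    TracePreserving (measurePrepare P ρ + measurePrepare (1 - P) σ) := fun X => by
  simp only [LinearMap.add_apply, measurePrepare_apply, Matrix.trace_add, Matrix.trace_smul, hρ,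
    hσ, smul_eq_mul, mul_one, Matrix.sub_mul, Matrix.one_mul, Matrix.trace_sub, add_sub_cancel]

lemma PsiM_eq_smul_vecMulVec (M : ℕ) : PsiM M = (M : ℝ)⁻¹ • Matrix.vecMulVec 1 (star 1) := by
  ext i j
  simp [PsiM]

lemma isState_PsiM {M : ℕ} (hM : M ≠ 0) : IsState (PsiM M) := by
  refine ⟨?_, ?_⟩
  · rw [PsiM_eq_smul_vecMulVec]
    exact (Matrix.posSemidef_vecMulVec_self_star 1).smul (by positivity)
  · simp [PsiM, Matrix.trace, hM]

lemma PsiM_mul_self {M : ℕ} (hM : M ≠ 0) : PsiM M * PsiM M = PsiM M := by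
  ext i j
  simp only [PsiM, one_div, Matrix.mul_apply, Matrix.of_apply, Finset.sum_const,
    Finset.card_univ, Fintype.card_fin, nsmul_eq_mul]
  field_simp

lemma trace_PsiM_mul_of_isDiag {M : ℕ} {δ : Matrix (Fin M) (Fin M) ℂ} (hδ : δ.IsDiag) :
    (PsiM M * δ).trace = δ.trace / M := by
  rw [← hδ.diagonal_diag]
  simp [Matrix.trace, PsiM, div_eq_inv_mul, Finset.mul_sum]

noncomputable def maxMixed (ι : Type*) [Fintype ι] [DecidableEq ι] : Matrix ι ι ℂ :=
  (Fintype.card ι : ℝ)⁻¹ • 1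

lemma card_smul_maxMixed [Fintype ι] [DecidableEq ι] [Nonempty ι] :
    (Fintype.card ι : ℝ) • maxMixed ι = 1 := by
  rw [maxMixed, smul_smul, mul_inv_cancel₀ (by positivity), one_smul]

lemma isIncoherent_maxMixed [Fintype ι] [DecidableEq ι] [Nonempty ι] :
    IsIncoherent (maxMixed ι) := by
  refine ⟨⟨Matrix.PosSemidef.one.smul (by positivity), ?_⟩, Matrix.isDiag_one.smul _⟩
  rw [maxMixed, Matrix.trace_smul, Matrix.trace_one, Complex.real_smul, Complex.ofReal_inv,
    Complex.ofReal_natCast, inv_mul_cancel₀ (by simp)]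

lemma Cmax_apply_PsiM_le [Fintype ι] {M : ℕ} (hM : M ≠ 0)
    {Λ : Matrix (Fin M) (Fin M) ℂ →ₗ[ℂ] Matrix ι ι ℂ} (hΛ : IsMIO Λ) :
    Cmax (Λ (PsiM M)) ≤ Real.logb 2 M := by
  have : NeZero M := ⟨hM⟩
  refine Cmax_le_logb (hΛ.isState_apply (isState_PsiM hM)) (hΛ.2.2 _ isIncoherent_maxMixed) ?_
  calc Λ (PsiM M) ≤ Λ 1 := hΛ.1.monotone (isState_PsiM hM).le_one
    _ = (M : ℝ) • Λ (maxMixed (Fin M)) := by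
      rw [← LinearMap.map_smul_of_tower, ← card_smul_maxMixed, Fintype.card_fin]

lemma exists_isMIO_apply_PsiM_eq_of_le_smul [Fintype ι] [DecidableEq ι] {ρ δ : Matrix ι ι ℂ}
    (hρ : IsState ρ) (hδ : IsIncoherent δ) {M : ℕ} (hM : 2 ≤ M) (h : ρ ≤ (M : ℝ) • δ) :
    ∃ Λ : Matrix (Fin M) (Fin M) ℂ →ₗ[ℂ] Matrix ι ι ℂ, IsMIO Λ ∧ Λ (PsiM M) = ρ := by
  have hM₁ : (1 : ℝ) < M := by exact_mod_cast hM
  have hM₁C : (M : ℂ) - 1 ≠ 0 := sub_ne_zero.mpr (by exact_mod_cast (by omega : M ≠ 1))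
  set σ := ((M : ℝ) - 1)⁻¹ • ((M : ℝ) • δ - ρ)
  have hσ : IsState σ := by
    refine ⟨(Matrix.le_iff.mp h).smul (inv_nonneg.mpr (by linarith)), ?_⟩
    rw [Matrix.trace_smul, Matrix.trace_sub, Matrix.trace_smul, hδ.1.2, hρ.2]
    simp only [Complex.real_smul, mul_one]
    push_cast
    field_simp
  have hΨ := isState_PsiM (M := M) (by omega)
  refine ⟨measurePrepare (PsiM M) ρ + measurePrepare (1 - PsiM M) σ, ⟨?_, ?_, ?_⟩, ?_⟩
  · exact (completelyPositive_measurePrepare hΨ.1 hρ.1).add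
      (completelyPositive_measurePrepare hΨ.le_one hσ.1)
  · exact tracePreserving_measurePrepare_add _ hρ.2 hσ.2
  · intro ω hω
    convert hδ using 1
    rw [LinearMap.add_apply, measurePrepare_apply, measurePrepare_apply, Matrix.sub_mul,
      Matrix.one_mul, Matrix.trace_sub, trace_PsiM_mul_of_isDiag hω.2, hω.1.2]
    simp only [σ, ← Complex.coe_smul]
    push_cast
    match_scalars <;> field_simp; ring
  · simp [measurePrepare_apply, PsiM_mul_self (M := M) (by omega), hΨ.2, Matrix.sub_mul]

lemma exists_isMIO_apply_PsiM_eq [Fintype ι] [DecidableEq ι] {ρ : Matrix ι ι ℂ}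
    (hρ : IsState ρ) : ∃ M : ℕ, 1 ≤ M ∧
      ∃ Λ : Matrix (Fin M) (Fin M) ℂ →ₗ[ℂ] Matrix ι ι ℂ, IsMIO Λ ∧ Λ (PsiM M) = ρ := by
  have := hρ.nonempty
  refine ⟨Fintype.card ι + 1, by omega,
    exists_isMIO_apply_PsiM_eq_of_le_smul hρ isIncoherent_maxMixed
      (by have := Fintype.card_pos (α := ι); omega) ?_⟩
  calc ρ ≤ 1 := hρ.le_one
    _ = (Fintype.card ι : ℝ) • maxMixed ι := card_smul_maxMixed.symm
    _ ≤ ((Fintype.card ι + 1 : ℕ) : ℝ) • maxMixed ι := by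
      rw [Matrix.le_iff, ← sub_smul, Nat.cast_succ, add_sub_cancel_left, one_smul]
      exact isIncoherent_maxMixed.1.1

/-- lower bound of Theorem 4: `C_max^ε(ρ) ≤ C_MIO^ε(ρ)`. -/
theorem Cmaxeps_le_CMIOeps {d : ℕ} (ρ : Matrix (Fin d) (Fin d) ℂ) (hρ : IsState ρ)
    (ε : ℝ) (hε : 0 ≤ ε) :
    Cmaxeps ρ ε ≤ CMIOeps ρ ε := by
  obtain ⟨M₀, hM₀, Λ₀, hΛ₀, hΛ₀ρ⟩ := exists_isMIO_apply_PsiM_eq hρ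
  refine le_csInf ⟨_, M₀, hM₀, rfl, Λ₀, hΛ₀, ?_⟩ ?_
  · rw [hΛ₀ρ, Fid_self hρ]
    linarith
  · rintro r ⟨M, hM, rfl, Λ, hΛ, hF⟩
    exact (Cmaxeps_le_Cmax (hΛ.isState_apply (isState_PsiM (by omega))) hF).trans
      (Cmax_apply_PsiM_le (by omega) hΛ)

end OneShot
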